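/- Let S = (P, L) be a generalized quadrangle of order (2,1) and let (R, ψ) be a faithful representation of S. Then |R| = 2^4. -/

import Mathlib

open scoped Classical

/-- A slim partial linear space: a nonempty point set, a nonempty collection of
lines each of which is a 3-element set of points, such that any two distinct
points lie in at most one common line. -/
structure SlimPLS (P : Type*) where
  lines : Set (Finset P)
  nonempty_pts : Nonempty P
  nonempty_lines : lines.Nonempty
  three_points : ∀ l ∈ lines, l.card = 3
  unique_line : ∀ l₁ ∈ lines, ∀ l₂ ∈ lines, ∀ x y : P,
    x ≠ y → x ∈ l₁ → y ∈ l₁ → x ∈ l₂ → y ∈ l₂ → l₁ = l₂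

namespace SlimPLS

variable {P : Type*}

/-- Two points are collinear if they are distinct and lie on a common line. -/
def Collinear (S : SlimPLS P) (x y : P) : Prop :=
  x ≠ y ∧ ∃ l ∈ S.lines, x ∈ l ∧ y ∈ l

/-- The collinearity graph of a slim partial linear space. -/
def graph (S : SlimPLS P) : SimpleGraph P where
  Adj x y := S.Collinear x y
  symm := ⟨fun x y h => ⟨Ne.symm h.1, h.2.elim fun l hl => ⟨l, hl.1, hl.2.2, hl.2.1⟩⟩⟩
  loopless := ⟨fun x h => h.1 rfl⟩

/-- `S` is a generalized quadrangle of order `(2, t)`: it is connected, no point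
is collinear with all other points, every point is on exactly `t+1` lines, and
for every point `x` and line `l` with `x ∉ l` there is exactly one point of `l`
collinear with `x`. -/
def IsGQ (S : SlimPLS P) (t : ℕ) : Prop :=
  S.graph.Connected ∧
  (∀ x : P, ∃ y : P, y ≠ x ∧ ¬ S.Collinear x y) ∧
  (∀ x : P, {l | l ∈ S.lines ∧ x ∈ l}.ncard = t + 1) ∧
  (∀ x : P, ∀ l ∈ S.lines, x ∉ l → ∃! y : P, y ∈ l ∧ S.Collinear x y)

/-- A set of points is an arc if its points are pairwise non-collinear. -/
def IsArc (S : SlimPLS P) (T : Set P) : Prop :=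
  ∀ x ∈ T, ∀ y ∈ T, x ≠ y → ¬ S.Collinear x y

/-- `{a,b,c}` is a complete 3-arc: three pairwise distinct, pairwise
non-collinear points not contained in a 4-arc. -/
def Complete3Arc (S : SlimPLS P) (a b c : P) : Prop :=
  a ≠ b ∧ a ≠ c ∧ b ≠ c ∧ S.IsArc {a, b, c} ∧
  ∀ d : P, d ∉ ({a, b, c} : Set P) → ¬ S.IsArc (insert d {a, b, c})

/-- `{a,b,c}` is a complete 3-arc of the subset `Q`: three pairwise distinct,
pairwise non-collinear points of `Q` not contained in a 4-arc inside `Q`. -/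
def Complete3ArcIn (S : SlimPLS P) (Q : Set P) (a b c : P) : Prop :=
  a ∈ Q ∧ b ∈ Q ∧ c ∈ Q ∧ a ≠ b ∧ a ≠ c ∧ b ≠ c ∧ S.IsArc {a, b, c} ∧
  ∀ d ∈ Q, d ∉ ({a, b, c} : Set P) → ¬ S.IsArc (insert d {a, b, c})

/-- `Q` is a sub-generalized-quadrangle of order `(2,t)` of `S`: together with
the lines of `S` contained in it, `Q` is a `(2,t)`-GQ; in particular any line
meeting `Q` in at least two points is contained in `Q`. -/
def IsSubGQ (S : SlimPLS P) (Q : Set P) (t : ℕ) : Prop :=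
  Q.Nonempty ∧
  (∃ l ∈ S.lines, (l : Set P) ⊆ Q) ∧
  (∀ l ∈ S.lines, ∀ x ∈ l, ∀ y ∈ l, x ≠ y → x ∈ Q → y ∈ Q → (l : Set P) ⊆ Q) ∧
  (SimpleGraph.induce Q S.graph).Connected ∧
  (∀ x ∈ Q, ∃ y ∈ Q, y ≠ x ∧ ¬ S.Collinear x y) ∧
  (∀ x ∈ Q, {l | l ∈ S.lines ∧ x ∈ l ∧ (l : Set P) ⊆ Q}.ncard = t + 1) ∧
  (∀ x ∈ Q, ∀ l ∈ S.lines, (l : Set P) ⊆ Q → x ∉ l → ∃! y : P, y ∈ l ∧ S.Collinear x y)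

/-- `S` is a near hexagon: connected of diameter 3, no point collinear with all
other points, and for every point `x` and line `l` there is a unique point of
`l` nearest to `x`. -/
def IsNearHexagon (S : SlimPLS P) : Prop :=
  S.graph.Connected ∧
  (∀ x y : P, S.graph.dist x y ≤ 3) ∧
  (∃ x y : P, S.graph.dist x y = 3) ∧
  (∀ x : P, ∃ y : P, y ≠ x ∧ ¬ S.Collinear x y) ∧
  (∀ x : P, ∀ l ∈ S.lines, ∃! y : P, y ∈ l ∧ ∀ z ∈ l, S.graph.dist x y ≤ S.graph.dist x z)

/-- `S` is dense: any two points at distance 2 have at least two common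
neighbours. -/
def IsDense (S : SlimPLS P) : Prop :=
  ∀ x y : P, S.graph.dist x y = 2 →
    ∃ u v : P, u ≠ v ∧ S.Collinear x u ∧ S.Collinear u y ∧ S.Collinear x v ∧ S.Collinear v y

/-- `Q` is a quad: a convex subset of diameter 2 in which no point is collinear
with all other points of `Q`. -/
def IsQuad (S : SlimPLS P) (Q : Set P) : Prop :=
  (∀ u ∈ Q, ∀ v ∈ Q, ∀ w : P,
      S.graph.dist u w + S.graph.dist w v = S.graph.dist u v → w ∈ Q) ∧
  (∀ u ∈ Q, ∀ v ∈ Q, S.graph.dist u v ≤ 2) ∧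
  (∃ u ∈ Q, ∃ v ∈ Q, S.graph.dist u v = 2) ∧
  (∀ u ∈ Q, ∃ v ∈ Q, v ≠ u ∧ ¬ S.Collinear u v)

/-- A quad `Q` is of type `(2, t₂)` if every point of `Q` lies on exactly
`t₂ + 1` lines contained in `Q`. -/
def QuadType (S : SlimPLS P) (Q : Set P) (t₂ : ℕ) : Prop :=
  ∀ x ∈ Q, {l | l ∈ S.lines ∧ x ∈ l ∧ (l : Set P) ⊆ Q}.ncard = t₂ + 1

/-- The point-quad pair `(x, Q)` is classical: there is a unique point `y ∈ Q`
nearest to `x`, with `d(x,z) = d(x,y) + d(y,z)` for all `z ∈ Q`. -/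
def IsClassicalPair (S : SlimPLS P) (x : P) (Q : Set P) : Prop :=
  ∃! y : P, y ∈ Q ∧ ∀ z ∈ Q, S.graph.dist x z = S.graph.dist x y + S.graph.dist y z

/-- A quad is classical (big) if every point-quad pair with it is classical. -/
def IsClassicalQuad (S : SlimPLS P) (Q : Set P) : Prop :=
  ∀ x : P, S.IsClassicalPair x Q

/-- A subspace: any line containing two of its points is contained in it. -/
def IsSubspace (S : SlimPLS P) (X : Set P) : Prop :=
  ∀ l ∈ S.lines, ∀ x ∈ l, ∀ y ∈ l, x ≠ y → x ∈ X → y ∈ X → (l : Set P) ⊆ X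

/-- The subspace generated by a set of points. -/
def subspaceGen (S : SlimPLS P) (A : Set P) : Set P :=
  ⋂₀ {X | S.IsSubspace X ∧ A ⊆ X}

/-- `NPdim S` is the rank over `F₂` of the distance-3 adjacency matrix. -/
noncomputable def NPdim [Fintype P] (S : SlimPLS P) : ℕ :=
  Matrix.rank (Matrix.of fun x y : P => if S.graph.dist x y = 3 then (1 : ZMod 2) else 0)

/-- `dimV S` is the dimension of the universal representation module of `S`:
the free `F₂`-vector space on the points modulo the span of the elements
`v_x + v_y + v_z` for the lines `{x,y,z}`. -/
noncomputable def dimV (S : SlimPLS P) : ℕ :=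
  Module.finrank (ZMod 2)
    ((P →₀ ZMod 2) ⧸ Submodule.span (ZMod 2)
      {f : P →₀ ZMod 2 | ∃ l ∈ S.lines, f = ∑ x ∈ l, Finsupp.single x 1})

end SlimPLS

/-- A representation of a slim partial linear space `S`: an assignment of an
order-2 element `r x` of `R` to each point `x`, such that the images generate
`R` and for every line `{x,y,z}` the set `{1, r x, r y, r z}` is a Klein four
subgroup (`r x * r y = r z` for the three pairwise distinct points of a line). -/
structure SlimPLS.Rep {P : Type*} (S : SlimPLS P) (R : Type*) [Group R] where
  r : P → R
  order_two : ∀ x : P, orderOf (r x) = 2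
  gen : Subgroup.closure (Set.range r) = ⊤
  line_rel : ∀ l ∈ S.lines, ∀ x ∈ l, ∀ y ∈ l, ∀ z ∈ l,
    x ≠ y → x ≠ z → y ≠ z → r x * r y = r z

/-- A finite 2-group is extraspecial if its Frattini subgroup, commutator
subgroup and center coincide and have order 2. -/
def IsExtraspecial (G : Type*) [Group G] : Prop :=
  Finite G ∧ IsPGroup 2 G ∧ frattini G = commutator G ∧
    commutator G = Subgroup.center G ∧ Nat.card (Subgroup.center G) = 2

/-!
A `(2,1)`-generalized quadrangle is the `3 × 3` grid: pick opposite points `x`, `y` and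
their common neighbours `a`, `c`; the four lines of the square `x a y c` close up to the grid
with rows `x a b`, `c y f`, `d e g`. In a representation, points on a line give commuting
involutions, and the two lines through the corner `g` give `r_b r_f = r_g = r_d r_e`, i.e.
`(r_x r_a)(r_c r_y) = (r_x r_c)(r_a r_y) = (r_a r_y)(r_x r_c)`; this forces `r_a, r_c` and
`r_x, r_y` to commute as well. So `R` is elementary abelian, generated by `r_x, r_a, r_c, r_y`,
a quotient of `𝔽₂⁴`. Faithfulness makes that quotient map injective: each nonzero vector maps
to the image of a point or to a product of the images of two distinct points.
-/

namespace SlimPLS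

variable {P : Type*} {S : SlimPLS P}

def IsLine (S : SlimPLS P) (p q r : P) : Prop :=
  ({p, q, r} : Finset P) ∈ S.lines

def Opposite (S : SlimPLS P) (p q : P) : Prop :=
  p ≠ q ∧ ¬ S.Collinear p q

def UniqueProjection (S : SlimPLS P) : Prop :=
  ∀ x : P, ∀ l ∈ S.lines, x ∉ l → ∃! y : P, y ∈ l ∧ S.Collinear x y

/-- The rows and columns of the array
```
x a b
c y f
d e g
```
are lines. -/
structure IsGrid (S : SlimPLS P) (x a b c d y e f g : P) : Prop where
  row₀ : S.IsLine x a b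
  row₁ : S.IsLine c y f
  row₂ : S.IsLine d e g
  col₀ : S.IsLine x c d
  col₁ : S.IsLine a y e
  col₂ : S.IsLine b f g

lemma Collinear.symm {p q : P} (h : S.Collinear p q) : S.Collinear q p :=
  S.graph.adj_symm h

lemma Opposite.symm {p q : P} (h : S.Opposite p q) : S.Opposite q p :=
  ⟨h.1.symm, fun h' => h.2 h'.symm⟩

lemma exists_eq_of_mem_lines {l : Finset P} (hl : l ∈ S.lines) {p q : P} (hp : p ∈ l) (hq : q ∈ l)
    (hpq : p ≠ q) : ∃ r, l = {p, q, r} := by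
  have hq' : q ∈ l.erase p := Finset.mem_erase.2 ⟨hpq.symm, hq⟩
  have hcard : ((l.erase p).erase q).card = 1 := by
    rw [Finset.card_erase_of_mem hq', Finset.card_erase_of_mem hp, S.three_points l hl]
  obtain ⟨r, hr⟩ := Finset.card_eq_one.1 hcard
  exact ⟨r, by rw [← hr, Finset.insert_erase hq', Finset.insert_erase hp]⟩

lemma Collinear.exists_isLine {p q : P} (h : S.Collinear p q) : ∃ r, S.IsLine p q r := by
  obtain ⟨hpq, l, hl, hp, hq⟩ := h
  obtain ⟨r, rfl⟩ := exists_eq_of_mem_lines hl hp hq hpq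
  exact ⟨r, hl⟩

namespace IsLine

variable {p q r : P}

lemma swap₁₂ (h : S.IsLine p q r) : S.IsLine q p r := by
  rwa [IsLine, Finset.insert_comm]

lemma swap₂₃ (h : S.IsLine p q r) : S.IsLine p r q := by
  rwa [IsLine, Finset.pair_comm]

lemma ne₁₂ (h : S.IsLine p q r) : p ≠ q := by
  rintro rfl
  have h3 := S.three_points _ h
  rw [Finset.insert_eq_of_mem (Finset.mem_insert_self p {r})] at h3
  have := Finset.card_le_two (a := p) (b := r)
  omega

lemma ne₁₃ (h : S.IsLine p q r) : p ≠ r :=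
  h.swap₂₃.ne₁₂

lemma ne₂₃ (h : S.IsLine p q r) : q ≠ r :=
  h.swap₁₂.swap₂₃.ne₁₂

lemma collinear (h : S.IsLine p q r) : S.Collinear p q :=
  ⟨h.ne₁₂, _, h, by simp, by simp⟩

lemma finset_ne_of_opposite {s u : P} (h₁ : S.IsLine p q r) (h₂ : S.IsLine p s u)
    (hqs : S.Opposite q s) : ({p, q, r} : Finset P) ≠ {p, s, u} := by
  intro heq
  have hs : s ∈ ({p, q, r} : Finset P) := heq ▸ by simp
  simp only [Finset.mem_insert, Finset.mem_singleton] at hs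
  rcases hs with rfl | rfl | rfl
  · exact h₂.ne₁₂ rfl
  · exact hqs.1 rfl
  · exact hqs.2 h₁.swap₁₂.swap₂₃.collinear

end IsLine

namespace UniqueProjection

variable (hS : S.UniqueProjection)
include hS

lemma eq_of_collinear_of_collinear {p q r s : P} (h : S.IsLine p q r) (hp : S.Collinear s p)
    (hq : S.Collinear s q) : s = r := by
  by_contra hsr
  have hs : s ∉ ({p, q, r} : Finset P) := by simp [hp.1, hq.1, hsr]
  obtain ⟨z, -, hz⟩ := hS s _ h hs
  exact h.ne₁₂ ((hz p ⟨by simp, hp⟩).trans (hz q ⟨by simp, hq⟩).symm)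

lemma collinear_of_opposite_of_opposite {p q r s : P} (h : S.IsLine p q r)
    (hp : S.Opposite s p) (hq : S.Opposite s q) : S.Collinear s r := by
  have hs : s ∉ ({p, q, r} : Finset P) := by
    simp only [Finset.mem_insert, Finset.mem_singleton, not_or]
    exact ⟨hp.1, hq.1, by rintro rfl; exact hp.2 h.swap₂₃.swap₁₂.collinear⟩
  obtain ⟨z, ⟨hz, hsz⟩, -⟩ := hS s _ h hs
  simp only [Finset.mem_insert, Finset.mem_singleton] at hz
  rcases hz with rfl | rfl | rfl
  · exact absurd hsz hp.2
  · exact absurd hsz hq.2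
  · exact hsz

lemma opposite_of_isLine {x a b q : P} (h : S.IsLine x a b) (ha : S.Collinear q a)
    (hx : S.Opposite x q) : S.Opposite b q :=
  ⟨by rintro rfl; exact hx.2 h.swap₂₃.collinear,
    fun hb => hx.1 (hS.eq_of_collinear_of_collinear h.swap₁₂.swap₂₃ ha hb.symm).symm⟩

lemma collinear_of_square {x a b c d y e f : P} (h₁ : S.IsLine x a b) (h₂ : S.IsLine x c d)
    (h₃ : S.IsLine a y e) (h₄ : S.IsLine c y f) (hxy : S.Opposite x y) (hac : S.Opposite a c) :
    S.Collinear e d :=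
  hS.collinear_of_opposite_of_opposite h₂ (hS.opposite_of_isLine h₃.swap₁₂ h₁.collinear hxy.symm)
    (hS.opposite_of_isLine h₃ h₄.collinear hac)

lemma opposite_of_square {x a b c d y e f : P} (h₁ : S.IsLine x a b) (h₂ : S.IsLine x c d)
    (h₃ : S.IsLine a y e) (h₄ : S.IsLine c y f) (hxy : S.Opposite x y) (hac : S.Opposite a c) :
    S.Opposite b y ∧ S.Opposite b c ∧ S.Opposite f x ∧ S.Opposite f a :=
  ⟨hS.opposite_of_isLine h₁ h₃.collinear.symm hxy,
    hS.opposite_of_isLine h₁.swap₁₂ h₂.collinear.symm hac,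
    hS.opposite_of_isLine h₄.swap₁₂ h₂.collinear hxy.symm,
    hS.opposite_of_isLine h₄ h₃.collinear hac.symm⟩

lemma exists_isGrid {x a b c d y e f : P} (h₁ : S.IsLine x a b) (h₂ : S.IsLine x c d)
    (h₃ : S.IsLine a y e) (h₄ : S.IsLine c y f) (hxy : S.Opposite x y) (hac : S.Opposite a c) :
    ∃ g, S.IsGrid x a b c d y e f g := by
  obtain ⟨hby, hbc, hfx, hfa⟩ := hS.opposite_of_square h₁ h₂ h₃ h₄ hxy hac
  obtain ⟨g, hg⟩ := (hS.collinear_of_square h₁ h₂ h₃ h₄ hxy hac).symm.exists_isLine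
  obtain ⟨g', hg'⟩ := (hS.collinear_of_square h₂ h₁ h₄ h₃ hxy hac.symm).symm.exists_isLine
  -- the squares `b x c f` and `b a y f`
  have hdg' : S.Collinear d g' :=
    hS.collinear_of_square h₁.swap₂₃.swap₁₂ hg' h₂ h₄.swap₂₃.swap₁₂ hbc hfx.symm
  have heg' : S.Collinear e g' :=
    hS.collinear_of_square h₁.swap₁₂.swap₂₃.swap₁₂ hg' h₃ h₄.swap₁₂.swap₂₃.swap₁₂ hby hfa.symm
  obtain rfl := hS.eq_of_collinear_of_collinear hg hdg'.symm heg'.symm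
  exact ⟨g', h₁, h₄, hg, h₂, h₃, hg'⟩

lemma exists_eq_collinear {l : Finset P} (hl : l ∈ S.lines) {x y : P} (hx : x ∈ l)
    (hy : S.Opposite y x) : ∃ a b, l = {x, a, b} ∧ S.Collinear y a := by
  obtain ⟨a, ⟨ha, hya⟩, -⟩ := hS y l hl fun hy' => hy.2 ⟨hy.1, l, hl, hy', hx⟩
  have hxa : x ≠ a := by rintro rfl; exact hy.2 hya
  obtain ⟨b, rfl⟩ := exists_eq_of_mem_lines hl hx ha hxa
  exact ⟨a, b, rfl, hya⟩

lemma opposite_of_finset_ne {x a b c d : P} (h₁ : S.IsLine x a b) (h₂ : S.IsLine x c d)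
    (hne : ({x, a, b} : Finset P) ≠ {x, c, d}) : S.Opposite a c := by
  refine ⟨?_, fun hac => ?_⟩
  · rintro rfl
    exact hne (S.unique_line _ h₁ _ h₂ x a h₁.ne₁₂ (by simp) (by simp) (by simp) (by simp))
  · obtain rfl := hS.eq_of_collinear_of_collinear h₁ h₂.collinear.symm hac.symm
    exact hne (S.unique_line _ h₁ _ h₂ x c h₁.ne₁₃ (by simp) (by simp) (by simp) (by simp))

end UniqueProjection

lemma mem_or_mem_of_two_lines {t q r s u p w : P}
    (ht : {l | l ∈ S.lines ∧ t ∈ l}.ncard = 2) (h₁ : S.IsLine t q r) (h₂ : S.IsLine t s u)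
    (hqs : S.Opposite q s) (h : S.IsLine t p w) :
    p ∈ ({t, q, r} : Finset P) ∨ p ∈ ({t, s, u} : Finset P) := by
  have hsub : ({{t, q, r}, {t, s, u}} : Set (Finset P)) ⊆ {l | l ∈ S.lines ∧ t ∈ l} := by
    rintro _ (rfl | rfl)
    exacts [⟨h₁, by simp⟩, ⟨h₂, by simp⟩]
  have heq := Set.eq_of_subset_of_ncard_le hsub
    (by rw [ht, Set.ncard_pair (h₁.finset_ne_of_opposite h₂ hqs)])
    (Set.finite_of_ncard_ne_zero (by rw [ht]; norm_num))
  have hmem : ({t, p, w} : Finset P) ∈ ({{t, q, r}, {t, s, u}} : Set (Finset P)) :=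
    heq ▸ ⟨h, by simp⟩
  rcases hmem with hl | hl
  · exact Or.inl (hl ▸ by simp)
  · exact Or.inr (hl ▸ by simp)

lemma IsGrid.mem_of_two_lines (hS : S.UniqueProjection)
    (hlines : ∀ p : P, {l | l ∈ S.lines ∧ p ∈ l}.ncard = 2) {x a b c d y e f g : P}
    (hG : S.IsGrid x a b c d y e f g) (hxy : S.Opposite x y) (hac : S.Opposite a c) (p : P) :
    p ∈ ({x, a, b, c, d, y, e, f, g} : Set P) := by
  by_cases hp : p ∈ ({x, a, b} : Finset P)
  · simp only [Finset.mem_insert, Finset.mem_singleton] at hp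
    simp only [Set.mem_insert_iff, Set.mem_singleton_iff]
    tauto
  obtain ⟨t, ⟨ht, hpt⟩, -⟩ := hS p _ hG.row₀ hp
  obtain ⟨w, hw⟩ := hpt.symm.exists_isLine
  obtain ⟨-, -, hfx, -⟩ := hS.opposite_of_square hG.row₀ hG.col₀ hG.col₁ hG.row₁ hxy hac
  simp only [Finset.mem_insert, Finset.mem_singleton] at ht
  have key : (p ∈ ({x, a, b} : Finset P) ∨ p ∈ ({x, c, d} : Finset P)) ∨
      (p ∈ ({a, x, b} : Finset P) ∨ p ∈ ({a, y, e} : Finset P)) ∨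
      (p ∈ ({b, x, a} : Finset P) ∨ p ∈ ({b, f, g} : Finset P)) := by
    rcases ht with rfl | rfl | rfl
    exacts [.inl (mem_or_mem_of_two_lines (hlines _) hG.row₀ hG.col₀ hac hw),
      .inr (.inl (mem_or_mem_of_two_lines (hlines _) hG.row₀.swap₁₂ hG.col₁ hxy hw)),
      .inr (.inr (mem_or_mem_of_two_lines (hlines _) hG.row₀.swap₂₃.swap₁₂ hG.col₂ hfx.symm hw))]
  simp only [Finset.mem_insert, Finset.mem_singleton, Set.mem_insert_iff,
    Set.mem_singleton_iff] at key ⊢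
  tauto

lemma IsGQ.uniqueProjection {t : ℕ} (h : S.IsGQ t) : S.UniqueProjection :=
  h.2.2.2

lemma IsGQ.exists_isGrid (hGQ : S.IsGQ 1) :
    ∃ x a b c d y e f g : P, S.IsGrid x a b c d y e f g ∧ S.Opposite x y ∧ S.Opposite a c ∧
      ∀ p, p ∈ ({x, a, b, c, d, y, e, f, g} : Set P) := by
  have hS := hGQ.uniqueProjection
  obtain ⟨x⟩ := S.nonempty_pts
  obtain ⟨y, hyx, hxy⟩ := hGQ.2.1 x
  have hxy : S.Opposite x y := ⟨hyx.symm, hxy⟩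
  obtain ⟨l₁, l₂, hne, hl⟩ := Set.ncard_eq_two.1 (hGQ.2.2.1 x)
  have hl₁ : l₁ ∈ {l | l ∈ S.lines ∧ x ∈ l} := hl ▸ by simp
  have hl₂ : l₂ ∈ {l | l ∈ S.lines ∧ x ∈ l} := hl ▸ by simp
  obtain ⟨a, b, rfl, hya⟩ := hS.exists_eq_collinear hl₁.1 hl₁.2 hxy.symm
  obtain ⟨c, d, rfl, hyc⟩ := hS.exists_eq_collinear hl₂.1 hl₂.2 hxy.symm
  have hac := hS.opposite_of_finset_ne hl₁.1 hl₂.1 hne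
  obtain ⟨e, he⟩ := hya.symm.exists_isLine
  obtain ⟨f, hf⟩ := hyc.symm.exists_isLine
  obtain ⟨g, hG⟩ := hS.exists_isGrid hl₁.1 hl₂.1 he hf hxy hac
  exact ⟨x, a, b, c, d, y, e, f, g, hG, hxy, hac, hG.mem_of_two_lines hS hGQ.2.2.1 hxy hac⟩

end SlimPLS

section QuadMap

variable {R : Type*} [Group R]

lemma pow_val_add_of_orderOf_eq {g : R} {n : ℕ} [NeZero n] (hg : orderOf g = n) (i j : ZMod n) :
    g ^ (i + j).val = g ^ i.val * g ^ j.val := by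
  subst hg
  rw [ZMod.val_add, pow_mod_orderOf, pow_add]

def quadMap (u v w k : R) (s : ZMod 2 × ZMod 2 × ZMod 2 × ZMod 2) : R :=
  (u ^ s.1.val * v ^ s.2.1.val) * (w ^ s.2.2.1.val * k ^ s.2.2.2.val)

variable {u v w k : R}
  (huv : Commute u v) (huw : Commute u w) (huk : Commute u k)
  (hvw : Commute v w) (hvk : Commute v k) (hwk : Commute w k)
  (hu : orderOf u = 2) (hv : orderOf v = 2) (hw : orderOf w = 2) (hk : orderOf k = 2)

include huv huw huk hvw hvk hwk hu hv hw hk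

lemma quadMap_add (s t : ZMod 2 × ZMod 2 × ZMod 2 × ZMod 2) :
    quadMap u v w k (s + t) = quadMap u v w k s * quadMap u v w k t := by
  obtain ⟨i, j, l, m⟩ := s
  obtain ⟨i', j', l', m'⟩ := t
  have hmid : Commute (w ^ l.val * k ^ m.val) (u ^ i'.val * v ^ j'.val) :=
    .mul_left (.mul_right (huw.symm.pow_pow _ _) (hvw.symm.pow_pow _ _))
      (.mul_right (huk.symm.pow_pow _ _) (hvk.symm.pow_pow _ _))
  rw [quadMap, quadMap, quadMap, hmid.mul_mul_mul_comm, (huv.symm.pow_pow _ _).mul_mul_mul_comm,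
    (hwk.symm.pow_pow _ _).mul_mul_mul_comm]
  simp only [Prod.mk_add_mk, pow_val_add_of_orderOf_eq hu,
    pow_val_add_of_orderOf_eq hv, pow_val_add_of_orderOf_eq hw, pow_val_add_of_orderOf_eq hk]

lemma nat_card_eq_of_quadMap (hgen : Subgroup.closure {u, v, w, k} = ⊤)
    (hker : ∀ s, quadMap u v w k s = 1 → s = 0) : Nat.card R = 2 ^ 4 := by
  let φ : Multiplicative (ZMod 2 × ZMod 2 × ZMod 2 × ZMod 2) →* R :=
    { toFun := fun s => quadMap u v w k s.toAdd
      map_one' := by simp [quadMap]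
      map_mul' := fun s t => quadMap_add huv huw huk hvw hvk hwk hu hv hw hk _ _ }
  have hinj : Function.Injective φ :=
    (injective_iff_map_eq_one φ).2 fun s hs => toAdd_eq_zero.1 (hker _ hs)
  have hsurj : Function.Surjective φ := by
    refine MonoidHom.range_eq_top.1 (eq_top_iff.2 (hgen ▸ (Subgroup.closure_le _).2 ?_))
    rintro _ (rfl | rfl | rfl | rfl)
    · exact ⟨.ofAdd (1, 0, 0, 0), by simp [φ, quadMap, ZMod.val_one]⟩
    · exact ⟨.ofAdd (0, 1, 0, 0), by simp [φ, quadMap, ZMod.val_one]⟩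
    · exact ⟨.ofAdd (0, 0, 1, 0), by simp [φ, quadMap, ZMod.val_one]⟩
    · exact ⟨.ofAdd (0, 0, 0, 1), by simp [φ, quadMap, ZMod.val_one]⟩
  rw [← Nat.card_congr (Equiv.ofBijective φ ⟨hinj, hsurj⟩)]
  simp

end QuadMap

namespace SlimPLS.Rep

variable {P : Type*} {S : SlimPLS P} {R : Type*} [Group R] (ρ : S.Rep R)

lemma ne_one (p : P) : ρ.r p ≠ 1 := fun h => by
  simpa [h] using ρ.order_two p

lemma mul_self (p : P) : ρ.r p * ρ.r p = 1 := by
  rw [← pow_two, ← ρ.order_two p, pow_orderOf_eq_one]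

lemma mul_ne_one (hf : Function.Injective ρ.r) {p q : P} (hpq : p ≠ q) : ρ.r p * ρ.r q ≠ 1 :=
  fun h => hpq <| hf <|
    (mul_eq_one_iff_eq_inv.1 h).trans (inv_eq_of_mul_eq_one_right (ρ.mul_self q))

lemma mul_eq {p q s : P} (h : S.IsLine p q s) : ρ.r p * ρ.r q = ρ.r s :=
  ρ.line_rel _ h p (by simp) q (by simp) s (by simp) h.ne₁₂ h.ne₁₃ h.ne₂₃

lemma commute {p q s : P} (h : S.IsLine p q s) : Commute (ρ.r p) (ρ.r q) :=
  (ρ.mul_eq h).trans (ρ.mul_eq h.swap₁₂).symm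

variable {x a b c d y e f g : P}

lemma commute_of_isGrid (hG : S.IsGrid x a b c d y e f g) :
    Commute (ρ.r a) (ρ.r c) ∧ Commute (ρ.r x) (ρ.r y) := by
  have h₁ : ρ.r x * ρ.r a * (ρ.r c * ρ.r y) = ρ.r x * ρ.r c * (ρ.r a * ρ.r y) := by
    rw [ρ.mul_eq hG.row₀, ρ.mul_eq hG.row₁, ρ.mul_eq hG.col₀, ρ.mul_eq hG.col₁,
      ρ.mul_eq hG.col₂, ρ.mul_eq hG.row₂]
  have h₂ : ρ.r a * ρ.r y * (ρ.r x * ρ.r c) = ρ.r x * ρ.r a * (ρ.r c * ρ.r y) := by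
    rw [ρ.mul_eq hG.row₀, ρ.mul_eq hG.row₁, ρ.mul_eq hG.col₀, ρ.mul_eq hG.col₁,
      ρ.mul_eq hG.col₂, ρ.mul_eq hG.row₂.swap₁₂]
  rw [mul_assoc, mul_assoc, mul_left_cancel_iff, ← mul_assoc, ← mul_assoc,
    mul_right_cancel_iff] at h₁
  rw [(ρ.commute hG.row₀).eq, (ρ.commute hG.row₁).eq, mul_assoc, mul_assoc, mul_left_cancel_iff,
    ← mul_assoc, ← mul_assoc, mul_right_cancel_iff] at h₂
  exact ⟨h₁, h₂.symm⟩

lemma closure_eq_top_of_isGrid (hG : S.IsGrid x a b c d y e f g)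
    (hcover : ∀ p, p ∈ ({x, a, b, c, d, y, e, f, g} : Set P)) :
    Subgroup.closure {ρ.r x, ρ.r a, ρ.r c, ρ.r y} = ⊤ := by
  rw [eq_top_iff, ← ρ.gen, Subgroup.closure_le]
  rintro _ ⟨p, rfl⟩
  set T : Set R := {ρ.r x, ρ.r a, ρ.r c, ρ.r y}
  have hx : ρ.r x ∈ Subgroup.closure T := Subgroup.subset_closure (by simp [T])
  have ha : ρ.r a ∈ Subgroup.closure T := Subgroup.subset_closure (by simp [T])
  have hc : ρ.r c ∈ Subgroup.closure T := Subgroup.subset_closure (by simp [T])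
  have hy : ρ.r y ∈ Subgroup.closure T := Subgroup.subset_closure (by simp [T])
  rcases hcover p with rfl | rfl | rfl | rfl | rfl | rfl | rfl | rfl | rfl
  · exact hx
  · exact ha
  · exact ρ.mul_eq hG.row₀ ▸ mul_mem hx ha
  · exact hc
  · exact ρ.mul_eq hG.col₀ ▸ mul_mem hx hc
  · exact hy
  · exact ρ.mul_eq hG.col₁ ▸ mul_mem ha hy
  · exact ρ.mul_eq hG.row₁ ▸ mul_mem hc hy
  · exact ρ.mul_eq hG.col₂ ▸ ρ.mul_eq hG.row₀ ▸ ρ.mul_eq hG.row₁ ▸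
      mul_mem (mul_mem hx ha) (mul_mem hc hy)

lemma eq_zero_of_quadMap_eq_one (hS : S.UniqueProjection) (hG : S.IsGrid x a b c d y e f g)
    (hxy : S.Opposite x y) (hac : S.Opposite a c) (hf : Function.Injective ρ.r)
    (s : ZMod 2 × ZMod 2 × ZMod 2 × ZMod 2) (hs : quadMap (ρ.r x) (ρ.r a) (ρ.r c) (ρ.r y) s = 1) :
    s = 0 := by
  obtain ⟨hby, hbc, hfx, hfa⟩ := hS.opposite_of_square hG.row₀ hG.col₀ hG.col₁ hG.row₁ hxy hac
  have distinct : x ≠ y ∧ a ≠ c ∧ b ≠ y ∧ b ≠ c ∧ x ≠ f ∧ a ≠ f :=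
    ⟨hxy.1, hac.1, hby.1, hbc.1, hfx.1.symm, hfa.1.symm⟩
  have zmod_two : ∀ i : ZMod 2, i = 0 ∨ i = 1 := by decide
  obtain ⟨i, j, k, l⟩ := s
  rcases zmod_two i with rfl | rfl <;> rcases zmod_two j with rfl | rfl <;>
    rcases zmod_two k with rfl | rfl <;> rcases zmod_two l with rfl | rfl <;>
    simp only [quadMap, ZMod.val_zero, ZMod.val_one, pow_zero, pow_one, one_mul, mul_one,
      ρ.mul_eq hG.row₀, ρ.mul_eq hG.row₁, ρ.mul_eq hG.col₀, ρ.mul_eq hG.col₁, ρ.mul_eq hG.col₂]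
      at hs
  all_goals first
    | rfl
    | exact absurd hs (ρ.ne_one _)
    | exact absurd hs (ρ.mul_ne_one hf (by tauto))

end SlimPLS.Rep

/-- A faithful representation group of the `(2,1)`-GQ has order `2^4`. -/
theorem gq21_faithful_rep_card {P : Type*} (S : SlimPLS P)
    (hGQ : S.IsGQ 1) {R : Type*} [Group R] (ρ : S.Rep R)
    (hf : Function.Injective ρ.r) :
    Nat.card R = 2 ^ 4 := by
  obtain ⟨x, a, b, c, d, y, e, f, g, hG, hxy, hac, hcover⟩ := hGQ.exists_isGrid
  obtain ⟨hac_comm, hxy_comm⟩ := ρ.commute_of_isGrid hG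
  exact nat_card_eq_of_quadMap (ρ.commute hG.row₀) (ρ.commute hG.col₀) hxy_comm hac_comm
    (ρ.commute hG.col₁) (ρ.commute hG.row₁)
    (ρ.order_two x) (ρ.order_two a) (ρ.order_two c) (ρ.order_two y)
    (ρ.closure_eq_top_of_isGrid hG hcover)
    (ρ.eq_zero_of_quadMap_eq_one hGQ.uniqueProjection hG hxy hac hf)
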